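/- Let Z(x₁,x₂,x₃) = e^{x₃}·(x₁, x₂, 1−max(|x₁|,|x₂|)). Then there exist constants 0 < α₁ ≤ α₂ such that at every point x = (x₁,x₂,x₃) with max(|x₁|,|x₂|) < 1 and |x₁| ≠ |x₂|, the map Z is differentiable and α₁ ≤ |Z(x)|/‖DZ(x)‖ and |Z(x)|/ℓ(DZ(x)) ≤ α₂. -/

import Mathlib

/-- The Nicks–Sixsmith (pyramid-type) Zorich map on the fundamental beam:
`Z(x₁,x₂,x₃) = e^{x₃}·(x₁, x₂, 1 − max(|x₁|,|x₂|))`. -/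
noncomputable def Zmap (x : EuclideanSpace ℝ (Fin 3)) : EuclideanSpace ℝ (Fin 3) :=
  (WithLp.equiv 2 (Fin 3 → ℝ)).symm
    ![Real.exp (x 2) * x 0, Real.exp (x 2) * x 1,
      Real.exp (x 2) * (1 - max |x 0| |x 1|)]

/-- `ℓ(L) = inf_{|h|=1} |L h|`, the minimal stretching of a linear map `L : ℝ³ → ℝ³`. -/
noncomputable def ell (L : EuclideanSpace ℝ (Fin 3) →L[ℝ] EuclideanSpace ℝ (Fin 3)) : ℝ :=
  ⨅ h : Metric.sphere (0 : EuclideanSpace ℝ (Fin 3)) 1, ‖L (h : EuclideanSpace ℝ (Fin 3))‖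


/-! Off the diagonals `|x₁| = |x₂|` the height `max(|x₁|,|x₂|)` agrees near `x` with a linear
form `u x₁ + v x₂`, `(u, v) ∈ {(±1, 0), (0, ±1)}`. So `Z` is smooth near `x`, with
`DZ(x) = e^{x₃} M` for `M = [[1, 0, x₁], [0, 1, x₂], [-u, -v, 1 - (u x₁ + v x₂)]]`. On the beam the
entries of `M` are bounded by `1` and `det M = 1`, so `M` and `M⁻¹` are uniformly bounded:
`‖DZ(x)‖ ≤ 3 e^{x₃}` and `ℓ(DZ(x)) ≥ e^{x₃} / 5`. Together with `e^{x₃} / 2 ≤ |Z(x)| ≤ 2 e^{x₃}`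
this gives `α₁ = 1/6` and `α₂ = 10`. -/

open Real Filter Topology

local notation "ℝ³" => EuclideanSpace ℝ (Fin 3)

lemma norm_sq_fin_three (h : ℝ³) : ‖h‖ ^ 2 = h 0 ^ 2 + h 1 ^ 2 + h 2 ^ 2 := by
  simp [EuclideanSpace.real_norm_sq_eq, Fin.sum_univ_three]

section SquareBounds

variable {a b : ℝ}

lemma sq_add_mul_le (ha : a ^ 2 ≤ 1) (p q : ℝ) : (p + a * q) ^ 2 ≤ 2 * (p ^ 2 + q ^ 2) := by
  nlinarith [sq_nonneg (p - a * q), mul_nonneg (sub_nonneg.2 ha) (sq_nonneg q)]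

lemma sq_mul_add_mul_add_mul_le {c : ℝ} (ha : a ^ 2 ≤ 1) (hb : b ^ 2 ≤ 1) (hc : c ^ 2 ≤ 1)
    (p q r : ℝ) : (a * p + b * q + c * r) ^ 2 ≤ 3 * (p ^ 2 + q ^ 2 + r ^ 2) := by
  nlinarith [sq_nonneg (a * p - b * q), sq_nonneg (a * p - c * r), sq_nonneg (b * q - c * r),
    mul_nonneg (sub_nonneg.2 ha) (sq_nonneg p), mul_nonneg (sub_nonneg.2 hb) (sq_nonneg q),
    mul_nonneg (sub_nonneg.2 hc) (sq_nonneg r)]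

end SquareBounds

lemma le_ell_of_forall_le {L : ℝ³ →L[ℝ] ℝ³} {k : ℝ} (hk : ∀ h, k * ‖h‖ ≤ ‖L h‖) :
    k ≤ ell L := by
  have : Nonempty (Metric.sphere (0 : ℝ³) 1) :=
    (NormedSpace.sphere_nonempty.mpr zero_le_one).to_subtype
  refine le_ciInf fun ⟨h, hh⟩ ↦ ?_
  simpa [mem_sphere_zero_iff_norm.mp hh] using hk h

lemma ell_le_opNorm (L : ℝ³ →L[ℝ] ℝ³) : ell L ≤ ‖L‖ := by
  obtain ⟨h, hh⟩ := (NormedSpace.sphere_nonempty (x := (0 : ℝ³)) (r := 1)).mpr zero_le_one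
  refine ciInf_le_of_le ⟨0, ?_⟩ ⟨h, hh⟩ ?_
  · rintro _ ⟨h, rfl⟩
    exact norm_nonneg _
  · simpa [mem_sphere_zero_iff_norm.mp hh] using L.le_opNorm h

section LocalLinearity

variable {X : Type*} [TopologicalSpace X] {f g : X → ℝ} {x : X}

lemma ContinuousAt.exists_eventually_abs_eq_mul (hf : ContinuousAt f x) (hx : f x ≠ 0) :
    ∃ s : ℝ, s ^ 2 = 1 ∧ ∀ᶠ y in 𝓝 x, |f y| = s * f y := by
  rcases hx.lt_or_gt with hneg | hpos
  · refine ⟨-1, by norm_num, (hf.eventually (eventually_lt_nhds hneg)).mono fun y hy ↦ ?_⟩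
    rw [abs_of_neg hy]
    ring
  · refine ⟨1, by norm_num, (hf.eventually (eventually_gt_nhds hpos)).mono fun y hy ↦ ?_⟩
    rw [abs_of_pos hy, one_mul]

lemma exists_max_abs_eventuallyEq_linear (hf : ContinuousAt f x) (hg : ContinuousAt g x)
    (hfg : |f x| ≠ |g x|) :
    ∃ u v : ℝ, u ^ 2 ≤ 1 ∧ v ^ 2 ≤ 1 ∧
      (fun y ↦ max |f y| |g y|) =ᶠ[𝓝 x] fun y ↦ u * f y + v * g y := by
  wlog hlt : |g x| < |f x| generalizing f g
  · obtain ⟨v, u, hv, hu, h⟩ := this hg hf hfg.symm (hfg.lt_or_gt.resolve_right hlt)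
    exact ⟨u, v, hu, hv, h.mono fun y hy ↦ by simp only at hy ⊢; rw [max_comm, hy, add_comm]⟩
  obtain ⟨s, hs, habs⟩ := hf.exists_eventually_abs_eq_mul
    (abs_pos.mp ((abs_nonneg _).trans_lt hlt))
  refine ⟨s, 0, hs.le, by norm_num, ?_⟩
  filter_upwards [habs, hg.abs.eventually_lt hf.abs hlt] with y habsy hlty
  rw [max_eq_left hlty.le, habsy, zero_mul, add_zero]

end LocalLinearity

noncomputable def zorichModel (m : ℝ³ → ℝ) (y : ℝ³) : ℝ³ :=
  (WithLp.equiv 2 (Fin 3 → ℝ)).symm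
    ![exp (y 2) * y 0, exp (y 2) * y 1, exp (y 2) * (1 - m y)]

lemma Zmap_eq_zorichModel : Zmap = zorichModel fun y ↦ max |y 0| |y 1| := rfl

noncomputable def zorichJacobian (u v a b : ℝ) : ℝ³ →L[ℝ] ℝ³ :=
  Matrix.toEuclideanCLM (n := Fin 3) (𝕜 := ℝ)
    !![1, 0, a; 0, 1, b; -u, -v, 1 - (u * a + v * b)]

lemma zorichJacobian_apply (u v a b : ℝ) (h : ℝ³) :
    zorichJacobian u v a b h =
      (WithLp.equiv 2 (Fin 3 → ℝ)).symm
        ![h 0 + a * h 2, h 1 + b * h 2, (1 - (u * a + v * b)) * h 2 - u * h 0 - v * h 1] := by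
  ext i
  fin_cases i <;>
    simp only [zorichJacobian, Matrix.ofLp_toEuclideanCLM, Matrix.mulVec, dotProduct,
      Matrix.of_apply, Matrix.cons_val', Matrix.cons_val_fin_one, Matrix.cons_val_zero,
      Matrix.cons_val_one, Matrix.cons_val, Fin.sum_univ_three, WithLp.equiv_symm_apply,
      Fin.zero_eta, Fin.mk_one, Fin.reduceFinMk, Fin.isValue] <;> ring

lemma hasFDerivAt_zorichModel_linear (u v : ℝ) (x : ℝ³) :
    HasFDerivAt (zorichModel fun y ↦ u * y 0 + v * y 1)
      (exp (x 2) • zorichJacobian u v (x 0) (x 1)) x := by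
  refine hasFDerivWithinAt_univ.mp
    (hasFDerivWithinAt_euclidean.mpr fun i ↦ hasFDerivWithinAt_univ.mpr ?_)
  have hproj (j : Fin 3) : HasFDerivAt (fun y : ℝ³ ↦ y j) (EuclideanSpace.proj (𝕜 := ℝ) j) x :=
    (EuclideanSpace.proj (𝕜 := ℝ) j).hasFDerivAt
  have hexp := (hproj 2).exp
  have hheight := (((hproj 0).const_mul u).add ((hproj 1).const_mul v)).const_sub 1
  fin_cases i <;> [apply (hexp.mul (hproj 0)).congr_fderiv;
    apply (hexp.mul (hproj 1)).congr_fderiv; apply (hexp.mul hheight).congr_fderiv] <;> ext h <;>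
    simp only [add_apply, smul_apply, neg_apply, ContinuousLinearMap.comp_smulₛₗ, RingHom.id_apply,
      PiLp.proj_apply, smul_eq_mul, ContinuousLinearMap.comp_apply, zorichJacobian_apply,
      WithLp.equiv_symm_apply, Fin.zero_eta, Fin.mk_one, Fin.reduceFinMk, Fin.isValue,
      Matrix.cons_val_zero, Matrix.cons_val_one, Matrix.cons_val, Pi.add_apply] <;> ring

section JacobianBounds

variable {u v a b : ℝ}

lemma norm_zorichJacobian_apply_le (hu : u ^ 2 ≤ 1) (hv : v ^ 2 ≤ 1) (ha : a ^ 2 ≤ 1)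
    (hb : b ^ 2 ≤ 1) (hw : (1 - (u * a + v * b)) ^ 2 ≤ 1) (h : ℝ³) :
    ‖zorichJacobian u v a b h‖ ≤ 3 * ‖h‖ := by
  rw [← sq_le_sq₀ (norm_nonneg _) (by positivity), mul_pow, norm_sq_fin_three, norm_sq_fin_three,
    zorichJacobian_apply]
  have h0 := sq_add_mul_le ha (h 0) (h 2)
  have h1 := sq_add_mul_le hb (h 1) (h 2)
  have h2 := sq_mul_add_mul_add_mul_le hw (neg_sq u ▸ hu) (neg_sq v ▸ hv) (h 2) (h 0) (h 1)
  simp only [WithLp.equiv_symm_apply, PiLp.toLp_apply, Matrix.cons_val]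
  nlinarith

lemma norm_le_five_mul_norm_zorichJacobian_apply (hu : u ^ 2 ≤ 1) (hv : v ^ 2 ≤ 1)
    (ha : a ^ 2 ≤ 1) (hb : b ^ 2 ≤ 1) (h : ℝ³) :
    ‖h‖ ≤ 5 * ‖zorichJacobian u v a b h‖ := by
  set T := zorichJacobian u v a b h with hT
  have hT0 : T 0 = h 0 + a * h 2 := by simp [hT, zorichJacobian_apply]
  have hT1 : T 1 = h 1 + b * h 2 := by simp [hT, zorichJacobian_apply]
  have hT2 : T 2 = (1 - (u * a + v * b)) * h 2 - u * h 0 - v * h 1 := by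
    simp [hT, zorichJacobian_apply]
  -- the last row `(u, v, 1)` of the inverse matrix (the determinant is `1`)
  have hinv : h 2 = u * T 0 + v * T 1 + 1 * T 2 := by rw [hT0, hT1, hT2]; ring
  have h2 := sq_mul_add_mul_add_mul_le hu hv (by norm_num : (1 : ℝ) ^ 2 ≤ 1) (T 0) (T 1) (T 2)
  have h0 := sq_add_mul_le (neg_sq a ▸ ha) (T 0) (h 2)
  have h1 := sq_add_mul_le (neg_sq b ▸ hb) (T 1) (h 2)
  rw [← hinv] at h2
  rw [show T 0 + -a * h 2 = h 0 by rw [hT0]; ring] at h0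
  rw [show T 1 + -b * h 2 = h 1 by rw [hT1]; ring] at h1
  rw [← sq_le_sq₀ (norm_nonneg _) (by positivity), mul_pow, norm_sq_fin_three, norm_sq_fin_three]
  linarith [sq_nonneg (T 0), sq_nonneg (T 1), sq_nonneg (T 2)]

end JacobianBounds

lemma norm_sq_Zmap (x : ℝ³) :
    ‖Zmap x‖ ^ 2 = exp (x 2) ^ 2 * (x 0 ^ 2 + x 1 ^ 2 + (1 - max |x 0| |x 1|) ^ 2) := by
  rw [norm_sq_fin_three]
  simp only [Zmap, WithLp.equiv_symm_apply, Matrix.cons_val_zero, Matrix.cons_val_one,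
    Matrix.cons_val]
  ring

lemma exp_div_two_le_norm_Zmap (x : ℝ³) : exp (x 2) / 2 ≤ ‖Zmap x‖ := by
  have hmax : max |x 0| |x 1| ^ 2 ≤ x 0 ^ 2 + x 1 ^ 2 := by
    rcases max_choice |x 0| |x 1| with h | h <;> rw [h, sq_abs] <;> nlinarith
  rw [← sq_le_sq₀ (by positivity) (norm_nonneg _), norm_sq_Zmap, div_pow]
  nlinarith [exp_pos (x 2), sq_nonneg (2 * max |x 0| |x 1| - 1)]

lemma norm_Zmap_le {x : ℝ³} (hx : max |x 0| |x 1| ≤ 1) : ‖Zmap x‖ ≤ 2 * exp (x 2) := by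
  have h0 : x 0 ^ 2 ≤ 1 := (sq_le_one_iff_abs_le_one _).2 ((le_max_left _ _).trans hx)
  have h1 : x 1 ^ 2 ≤ 1 := (sq_le_one_iff_abs_le_one _).2 ((le_max_right _ _).trans hx)
  have h2 : (1 - max |x 0| |x 1|) ^ 2 ≤ 1 := by
    nlinarith [(abs_nonneg (x 0)).trans (le_max_left _ (|x 1|))]
  rw [← sq_le_sq₀ (norm_nonneg _) (by positivity), norm_sq_Zmap, mul_pow]
  nlinarith [mul_le_mul_of_nonneg_left (add_le_add (add_le_add h0 h1) h2)
    (sq_nonneg (exp (x 2)))]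

lemma exists_hasFDerivAt_Zmap {x : ℝ³} (hx : |x 0| ≠ |x 1|) :
    ∃ u v : ℝ, u ^ 2 ≤ 1 ∧ v ^ 2 ≤ 1 ∧ u * x 0 + v * x 1 = max |x 0| |x 1| ∧
      HasFDerivAt Zmap (exp (x 2) • zorichJacobian u v (x 0) (x 1)) x := by
  have hcoord (i : Fin 3) : ContinuousAt (fun y : ℝ³ ↦ y i) x :=
    (EuclideanSpace.proj (𝕜 := ℝ) i).continuous.continuousAt
  obtain ⟨u, v, hu, hv, hmax⟩ := exists_max_abs_eventuallyEq_linear (hcoord 0) (hcoord 1) hx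
  have hZ : Zmap =ᶠ[𝓝 x] zorichModel fun y ↦ u * y 0 + v * y 1 :=
    hmax.mono fun y hy ↦ by simp only [Zmap_eq_zorichModel, zorichModel, hy]
  exact ⟨u, v, hu, hv, hmax.eq_of_nhds.symm,
    (hasFDerivAt_zorichModel_linear u v x).congr_of_eventuallyEq hZ⟩

/-- There are constants `0 < α₁ ≤ α₂` such that at every point of the open fundamental
beam off the diagonals, `Z` is differentiable and
`α₁ ≤ |Z(x)|/‖DZ(x)‖` and `|Z(x)|/ℓ(DZ(x)) ≤ α₂`. -/
theorem Zmap_derivative_comparison : ∃ α₁ α₂ : ℝ, 0 < α₁ ∧ α₁ ≤ α₂ ∧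
    ∀ x : EuclideanSpace ℝ (Fin 3), max |x 0| |x 1| < 1 → |x 0| ≠ |x 1| →
      DifferentiableAt ℝ Zmap x ∧
      α₁ ≤ ‖Zmap x‖ / ‖fderiv ℝ Zmap x‖ ∧
      ‖Zmap x‖ / ell (fderiv ℝ Zmap x) ≤ α₂ := by
  refine ⟨1 / 6, 10, by norm_num, by norm_num, fun x hmax hne ↦ ?_⟩
  obtain ⟨u, v, hu, hv, hm, hD⟩ := exists_hasFDerivAt_Zmap hne
  have ha : x 0 ^ 2 ≤ 1 := (sq_le_one_iff_abs_le_one _).2 ((le_max_left _ _).trans hmax.le)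
  have hb : x 1 ^ 2 ≤ 1 := (sq_le_one_iff_abs_le_one _).2 ((le_max_right _ _).trans hmax.le)
  have hw : (1 - (u * x 0 + v * x 1)) ^ 2 ≤ 1 := by
    rw [hm]
    nlinarith [(abs_nonneg (x 0)).trans (le_max_left _ (|x 1|))]
  have he := exp_pos (x 2)
  have hnorm : ‖fderiv ℝ Zmap x‖ ≤ 3 * exp (x 2) := by
    refine hD.fderiv ▸ ContinuousLinearMap.opNorm_le_bound _ (by positivity) fun h ↦ ?_
    rw [smul_apply, norm_smul, norm_of_nonneg he.le]
    linarith [mul_le_mul_of_nonneg_left (norm_zorichJacobian_apply_le hu hv ha hb hw h) he.le]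
  have hell : exp (x 2) / 5 ≤ ell (fderiv ℝ Zmap x) := by
    refine hD.fderiv ▸ le_ell_of_forall_le fun h ↦ ?_
    rw [smul_apply, norm_smul, norm_of_nonneg he.le]
    linarith [mul_le_mul_of_nonneg_left
      (norm_le_five_mul_norm_zorichJacobian_apply hu hv ha hb h) he.le]
  have hell_pos : 0 < ell (fderiv ℝ Zmap x) := (by positivity : 0 < exp (x 2) / 5).trans_le hell
  have hnorm_pos := hell_pos.trans_le (ell_le_opNorm _)
  refine ⟨hD.differentiableAt, ?_, ?_⟩
  · rw [le_div_iff₀ hnorm_pos]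
    linarith [exp_div_two_le_norm_Zmap x]
  · rw [div_le_iff₀ hell_pos]
    linarith [norm_Zmap_le hmax.le]
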